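/- Let X be an n×p real matrix, y ∈ ℝⁿ, λ > 0, and define J_λ(β, γ) = ‖Xβ − y‖² + λ‖β − γ‖². Let N be any norm on ℝᵖ, η_γ > 0, and D_γ = {γ ∈ ℝᵖ : N(γ) ≤ η_γ}. Let γ ∈ ℝᵖ with N(γ) ≥ η_γ, let S ⊆ {1, …, p} and α ∈ (0, 1) be such that the vector φ*(γ, S, α), defined by φ*(γ,S,α)ⱼ = γⱼ for j ∈ S and α·γⱼ for j ∉ S, satisfies N(φ*(γ, S, α)) ≤ η_γ, and let β₀ ∈ ℝᵖ minimize β ↦ J_λ(β, γ). Then: inf over β ∈ ℝᵖ of sup over γ' ∈ D_γ of J_λ(β, γ') ≥ α·J_λ(β₀, γ) − λα(1 − α)·‖γ_{Sᶜ}‖². -/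

import Mathlib

/-!
Evaluating the inner supremum at the feasible point `φ*(γ, S, α)` bounds it from below by
`J_λ(β, φ*)`. Coordinatewise, `(b - α g)² = α (b - g)² - α (1 - α) g² + (1 - α) b²`, so
`J_λ(β, φ*) ≥ α J_λ(β, γ) - λ α (1 - α) ‖γ_{Sᶜ}‖² ≥ α J_λ(β₀, γ) - λ α (1 - α) ‖γ_{Sᶜ}‖²`.
Real `sSup` is junk on sets unbounded above; this one is bounded because `J_λ(β, ·)` is
continuous and the `N`-ball is bounded, all norms on `ℝᵖ` being equivalent.
-/

/-- The objective `J_λ(β, γ) = ‖Xβ − y‖² + λ‖β − γ‖²`. -/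
noncomputable def Jobj (n p : ℕ) (X : Matrix (Fin n) (Fin p) ℝ) (y : Fin n → ℝ)
    (lam : ℝ) (β γ : Fin p → ℝ) : ℝ :=
  (∑ i, (X.mulVec β i - y i) ^ 2) + lam * ∑ j, (β j - γ j) ^ 2

def NormSynonym (E : Type*) : Type _ := E

instance {E : Type*} [AddCommGroup E] : AddCommGroup (NormSynonym E) :=
  inferInstanceAs (AddCommGroup E)

instance {E : Type*} [AddCommGroup E] [Module ℝ E] : Module ℝ (NormSynonym E) :=
  inferInstanceAs (Module ℝ E)

instance {E : Type*} [AddCommGroup E] [Module ℝ E] [FiniteDimensional ℝ E] :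
    FiniteDimensional ℝ (NormSynonym E) :=
  inferInstanceAs (FiniteDimensional ℝ E)

section NormBall

variable {E : Type*} [NormedAddCommGroup E] [NormedSpace ℝ E] [FiniteDimensional ℝ E]
  {N : E → ℝ}

theorem isBounded_setOf_le_of_isNorm (hN_eq_zero : ∀ x, N x = 0 ↔ x = 0)
    (hN_smul : ∀ (c : ℝ) (x : E), N (c • x) = |c| * N x)
    (hN_add : ∀ x z, N (x + z) ≤ N x + N z) (r : ℝ) :
    Bornology.IsBounded {x | N x ≤ r} := by
  have hN_neg (x : E) : N (-x) = N x := by simpa using hN_smul (-1) x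
  let : NormedAddCommGroup (NormSynonym E) := AddGroupNorm.toNormedAddCommGroup
    { toFun := N
      map_zero' := (hN_eq_zero 0).2 rfl
      neg' := hN_neg
      add_le' := hN_add
      eq_zero_of_map_eq_zero' := fun x => (hN_eq_zero x).1 }
  let : NormedSpace ℝ (NormSynonym E) := { norm_smul_le := fun c x => (hN_smul c x).le }
  -- The identity from `E` normed by `N` to `E` is linear in finite dimension, hence Lipschitz.
  let toE : NormSynonym E →L[ℝ] E := LinearMap.toContinuousLinearMap LinearMap.id
  refine (toE.lipschitz.isBounded_image (Metric.isBounded_closedBall (x := 0) (r := r))).subset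
    fun x hx => ⟨x, ?_, rfl⟩
  exact mem_closedBall_zero_iff.2 hx

theorem bddAbove_image_setOf_le_of_isNorm {f : E → ℝ} (hf : Continuous f)
    (hN_eq_zero : ∀ x, N x = 0 ↔ x = 0)
    (hN_smul : ∀ (c : ℝ) (x : E), N (c • x) = |c| * N x)
    (hN_add : ∀ x z, N (x + z) ≤ N x + N z) (r : ℝ) :
    BddAbove (f '' {x | N x ≤ r}) :=
  ((isBounded_setOf_le_of_isNorm hN_eq_zero hN_smul hN_add r).isCompact_closure.bddAbove_image
    hf.continuousOn).mono (Set.image_mono subset_closure)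

end NormBall

section PartialShrink

variable {ι : Type*} [Fintype ι] [DecidableEq ι]

def partialShrink (S : Finset ι) (α : ℝ) (γ : ι → ℝ) : ι → ℝ :=
  fun j => if j ∈ S then γ j else α * γ j

theorem sum_sq_sub_partialShrink_ge (S : Finset ι) {α : ℝ} (hα : α ≤ 1) (β γ : ι → ℝ) :
    α * ∑ j, (β j - γ j) ^ 2 - α * (1 - α) * ∑ j ∈ Sᶜ, γ j ^ 2 ≤
      ∑ j, (β j - partialShrink S α γ j) ^ 2 := by
  have h_on_S (j : ι) : α * (β j - γ j) ^ 2 ≤ (β j - γ j) ^ 2 :=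
    mul_le_of_le_one_left (sq_nonneg _) hα
  have h_off_S (j : ι) : α * (β j - γ j) ^ 2 - α * (1 - α) * γ j ^ 2 ≤ (β j - α * γ j) ^ 2 := by
    have h_expand : (β j - α * γ j) ^ 2 =
        α * (β j - γ j) ^ 2 - α * (1 - α) * γ j ^ 2 + (1 - α) * β j ^ 2 := by ring
    linarith [mul_nonneg (sub_nonneg.2 hα) (sq_nonneg (β j))]
  calc α * ∑ j, (β j - γ j) ^ 2 - α * (1 - α) * ∑ j ∈ Sᶜ, γ j ^ 2
      = ∑ j ∈ S, α * (β j - γ j) ^ 2 +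
          ∑ j ∈ Sᶜ, (α * (β j - γ j) ^ 2 - α * (1 - α) * γ j ^ 2) := by
        rw [Finset.mul_sum, ← Finset.sum_add_sum_compl S, Finset.sum_sub_distrib,
          Finset.mul_sum]
        ring
    _ ≤ ∑ j ∈ S, (β j - γ j) ^ 2 + ∑ j ∈ Sᶜ, (β j - α * γ j) ^ 2 := by
        gcongr with j _ j _
        exacts [h_on_S j, h_off_S j]
    _ = ∑ j, (β j - partialShrink S α γ j) ^ 2 := by
        rw [← Finset.sum_add_sum_compl S]
        congr 1 <;> refine Finset.sum_congr rfl fun j hj => ?_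
        · simp [partialShrink, hj]
        · simp [partialShrink, Finset.mem_compl.1 hj]

end PartialShrink

section Objective

variable {n p : ℕ} (X : Matrix (Fin n) (Fin p) ℝ) (y : Fin n → ℝ)

theorem continuous_Jobj (lam : ℝ) (β : Fin p → ℝ) : Continuous (Jobj n p X y lam β) := by
  unfold Jobj
  fun_prop

theorem Jobj_partialShrink_ge {lam : ℝ} (hlam : 0 ≤ lam) (S : Finset (Fin p)) {α : ℝ}
    (hα : α ≤ 1) (β γ : Fin p → ℝ) :
    α * Jobj n p X y lam β γ - lam * α * (1 - α) * ∑ j ∈ Sᶜ, γ j ^ 2 ≤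
      Jobj n p X y lam β (partialShrink S α γ) := by
  have h_fit : α * ∑ i, (X.mulVec β i - y i) ^ 2 ≤ ∑ i, (X.mulVec β i - y i) ^ 2 :=
    mul_le_of_le_one_left (Finset.sum_nonneg fun i _ => sq_nonneg _) hα
  have h_penalty := mul_le_mul_of_nonneg_left (sum_sq_sub_partialShrink_ge S hα β γ) hlam
  unfold Jobj
  linarith

end Objective

theorem optimality_gap_bound_partial_shrinkage_general (n p : ℕ)
    (X : Matrix (Fin n) (Fin p) ℝ) (y : Fin n → ℝ) (lam : ℝ) (hlam : 0 < lam)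
    (N : (Fin p → ℝ) → ℝ)
    (hN_eq_zero : ∀ x, N x = 0 ↔ x = 0)
    (hN_smul : ∀ (c : ℝ) (x : Fin p → ℝ), N (c • x) = |c| * N x)
    (hN_add : ∀ x z : Fin p → ℝ, N (x + z) ≤ N x + N z)
    (ηγ : ℝ)
    (γ : Fin p → ℝ)
    (S : Finset (Fin p)) (α : ℝ) (hα : α ∈ Set.Ioo (0 : ℝ) 1)
    (hφ : N (fun j => if j ∈ S then γ j else α * γ j) ≤ ηγ)
    (β₀ : Fin p → ℝ) (hβ₀ : ∀ β, Jobj n p X y lam β₀ γ ≤ Jobj n p X y lam β γ) :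
    (⨅ β : Fin p → ℝ,
        sSup {r : ℝ | ∃ γ' : Fin p → ℝ, N γ' ≤ ηγ ∧ r = Jobj n p X y lam β γ'}) ≥
      α * Jobj n p X y lam β₀ γ - lam * α * (1 - α) * (∑ j ∈ Sᶜ, γ j ^ 2) := by
  obtain ⟨hα0, hα1⟩ := hα
  refine le_ciInf fun β => ?_
  have hbdd : BddAbove {r : ℝ | ∃ γ' : Fin p → ℝ, N γ' ≤ ηγ ∧ r = Jobj n p X y lam β γ'} :=
    (bddAbove_image_setOf_le_of_isNorm (continuous_Jobj X y lam β) hN_eq_zero hN_smul hN_add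
      ηγ).mono <| by rintro _ ⟨γ', hγ', rfl⟩; exact ⟨γ', hγ', rfl⟩
  calc α * Jobj n p X y lam β₀ γ - lam * α * (1 - α) * ∑ j ∈ Sᶜ, γ j ^ 2
      ≤ α * Jobj n p X y lam β γ - lam * α * (1 - α) * ∑ j ∈ Sᶜ, γ j ^ 2 := by
        gcongr
        exact hβ₀ β
    _ ≤ Jobj n p X y lam β (partialShrink S α γ) := Jobj_partialShrink_ge X y hlam.le S hα1.le β γ
    _ ≤ _ := le_csSup hbdd ⟨_, hφ, rfl⟩

/-- For any norm `N`, `η_γ > 0`, `γ` with `N(γ) ≥ η_γ`, and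
`S, α ∈ (0,1)` such that `φ*(γ,S,α)` (keeping `γ` on `S`, shrinking by `α`
off `S`) satisfies `N(φ*(γ,S,α)) ≤ η_γ`, and `β₀` minimizing `β ↦ J_λ(β, γ)`:
`inf_β sup_{γ' ∈ D_γ} J_λ(β, γ') ≥ α J_λ(β₀, γ) − λα(1 − α)‖γ_{Sᶜ}‖²`. -/
theorem optimality_gap_bound_partial_shrinkage (n p : ℕ)
    (X : Matrix (Fin n) (Fin p) ℝ) (y : Fin n → ℝ) (lam : ℝ) (hlam : 0 < lam)
    (N : (Fin p → ℝ) → ℝ)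
    (hN_nonneg : ∀ x, 0 ≤ N x)
    (hN_eq_zero : ∀ x, N x = 0 ↔ x = 0)
    (hN_smul : ∀ (c : ℝ) (x : Fin p → ℝ), N (c • x) = |c| * N x)
    (hN_add : ∀ x z : Fin p → ℝ, N (x + z) ≤ N x + N z)
    (ηγ : ℝ) (hηγ : 0 < ηγ)
    (γ : Fin p → ℝ) (hγ : ηγ ≤ N γ)
    (S : Finset (Fin p)) (α : ℝ) (hα : α ∈ Set.Ioo (0 : ℝ) 1)
    (hφ : N (fun j => if j ∈ S then γ j else α * γ j) ≤ ηγ)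
    (β₀ : Fin p → ℝ) (hβ₀ : ∀ β, Jobj n p X y lam β₀ γ ≤ Jobj n p X y lam β γ) :
    (⨅ β : Fin p → ℝ,
        sSup {r : ℝ | ∃ γ' : Fin p → ℝ, N γ' ≤ ηγ ∧ r = Jobj n p X y lam β γ'}) ≥
      α * Jobj n p X y lam β₀ γ - lam * α * (1 - α) * (∑ j ∈ Sᶜ, γ j ^ 2) :=
  optimality_gap_bound_partial_shrinkage_general n p X y lam hlam N hN_eq_zero hN_smul hN_add ηγ γ S
    α hα hφ β₀ hβ₀
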